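/- arXiv:math/0604454 — 2 statements merged into one kernel-verified Lean document; each statement's English description precedes it below -/
import Mathlib

section
/- Let K be an open max cone in ℝ≥0^n (i.e., K \ {0} is open in ℝ≥0^n with the topology induced from ℝ^n) that contains no unit vector e^p (where e^p_j = 1 if j = p and 0 otherwise). Then every set of generators for K is totally dependent. -/
open scoped NNReal

/-- The max-algebraic span of `S`: all vectors `⨆_{x ∈ S} λ_x • x` where only
finitely many coefficients `λ_x` are nonzero (`MaxSpan ∅ = {0}`). -/
def MaxSpan {n : ℕ} (S : Set (Fin n → ℝ≥0)) : Set (Fin n → ℝ≥0) :=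
  {u | ∃ (F : Finset (Fin n → ℝ≥0)) (lam : (Fin n → ℝ≥0) → ℝ≥0),
    ↑F ⊆ S ∧ u = F.sup (fun x => lam x • x)}

/-- A max cone: a subset of `ℝ≥0ⁿ` closed under pointwise max `⊔` and under
multiplication by nonnegative scalars. -/
def MaxCone {n : ℕ} (K : Set (Fin n → ℝ≥0)) : Prop :=
  0 ∈ K ∧ (∀ x ∈ K, ∀ y ∈ K, x ⊔ y ∈ K) ∧ (∀ (c : ℝ≥0), ∀ x ∈ K, c • x ∈ K)

/-- `u` is an extremal in `K` if `u = v ⊔ w` with `v, w ∈ K` implies `u = v` or `u = w`. -/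
def IsExtremal {n : ℕ} (K : Set (Fin n → ℝ≥0)) (u : Fin n → ℝ≥0) : Prop :=
  u ∈ K ∧ ∀ v ∈ K, ∀ w ∈ K, u = v ⊔ w → u = v ∨ u = w

/-- A vector is scaled if its max norm `⨆ i, x i` equals `1`. -/
def Scaled {n : ℕ} (x : Fin n → ℝ≥0) : Prop := (⨆ i, x i) = 1

/-- The support of a vector. -/
def supp {n : ℕ} (v : Fin n → ℝ≥0) : Set (Fin n) := {j | 0 < v j}

/-- For `j ∈ supp u`, `rescale u j = (1 / u j) • u`, the `j`-scaling `u(j)`. -/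
noncomputable def rescale {n : ℕ} (u : Fin n → ℝ≥0) (j : Fin n) : Fin n → ℝ≥0 :=
  (u j)⁻¹ • u

/-- `T(j) = {u(j) : u ∈ T, j ∈ supp u}`. -/
noncomputable def setScale {n : ℕ} (T : Set (Fin n → ℝ≥0)) (j : Fin n) :
    Set (Fin n → ℝ≥0) :=
  {y | ∃ u ∈ T, j ∈ supp u ∧ y = rescale u j}

/-- `u` is minimal in `T` if `v ∈ T` and `v ≤ u` imply `v = u`. -/
def MinimalIn {n : ℕ} (T : Set (Fin n → ℝ≥0)) (u : Fin n → ℝ≥0) : Prop :=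
  u ∈ T ∧ ∀ v ∈ T, v ≤ u → v = u

/-- A set is totally dependent if each of its elements is a max combination of
the remaining ones. -/
def TotallyDependent {n : ℕ} (S : Set (Fin n → ℝ≥0)) : Prop :=
  ∀ x ∈ S, x ∈ MaxSpan (S \ {x})

/-- A set is independent if none of its elements is a max combination of
the remaining ones. -/
def IndependentSet {n : ℕ} (S : Set (Fin n → ℝ≥0)) : Prop :=
  ∀ x ∈ S, x ∉ MaxSpan (S \ {x})

/-- A basis for `K` is an independent set of generators for `K`. -/
def IsBasis {n : ℕ} (S K : Set (Fin n → ℝ≥0)) : Prop :=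
  IndependentSet S ∧ MaxSpan S = K

/-! A nonzero generator `x` lies in `K`, and since no unit vector does, `x` has two nonzero
coordinates `p ≠ q`. Openness of `K \ {0}` lets us lower `x` slightly at `p`, and separately at
`q`, inside `K`. Each lowered vector is a max combination `a • x ⊔ R` with `R` spanned by the
other generators, and `a < 1` because the lowered coordinate is smaller than that of `x`. As `x`
is the max of the two lowered vectors, `x = c • x ⊔ R` with `c < 1`, which forces `x = R`. -/

open Topology

lemma sup_smul_of_nonneg {α β : Type*} [LinearOrder α] [Zero β] [SemilatticeSup β] [SMul α β]
    [SMulPosMono α β] {x : β} (hx : 0 ≤ x) (a b : α) : (a ⊔ b) • x = a • x ⊔ b • x :=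
  (monotone_smul_right_of_nonneg hx).map_sup a b

section MaxSpan

variable {n : ℕ} {S : Set (Fin n → ℝ≥0)}

lemma zero_mem_maxSpan (S : Set (Fin n → ℝ≥0)) : 0 ∈ MaxSpan S :=
  ⟨∅, 0, by simp, rfl⟩

lemma subset_maxSpan : S ⊆ MaxSpan S :=
  fun x hx => ⟨{x}, 1, by simpa, by simp⟩

lemma Finset.sup_smul_eq_sup_ite_smul {F G : Finset (Fin n → ℝ≥0)} (hFG : F ⊆ G)
    (l : (Fin n → ℝ≥0) → ℝ≥0) :
    F.sup (fun x => l x • x) = G.sup (fun x => (if x ∈ F then l x else 0) • x) := by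
  simp only [ite_smul, zero_smul]
  rw [Finset.sup_ite, Finset.filter_mem_eq_inter, Finset.inter_eq_right.2 hFG]
  simp

lemma sup_mem_maxSpan {u v : Fin n → ℝ≥0} (hu : u ∈ MaxSpan S) (hv : v ∈ MaxSpan S) :
    u ⊔ v ∈ MaxSpan S := by
  obtain ⟨F, l, hF, rfl⟩ := hu
  obtain ⟨G, m, hG, rfl⟩ := hv
  refine ⟨F ∪ G, fun x => (if x ∈ F then l x else 0) ⊔ (if x ∈ G then m x else 0),
    by simpa using Set.union_subset hF hG, ?_⟩
  rw [Finset.sup_smul_eq_sup_ite_smul (G := F ∪ G) Finset.subset_union_left l,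
    Finset.sup_smul_eq_sup_ite_smul (G := F ∪ G) Finset.subset_union_right m, ← Finset.sup_sup]
  simp only [sup_smul_of_nonneg zero_le]
  rfl

lemma exists_eq_smul_sup_of_mem_maxSpan (x : Fin n → ℝ≥0) {u : Fin n → ℝ≥0}
    (hu : u ∈ MaxSpan S) : ∃ c : ℝ≥0, ∃ R ∈ MaxSpan (S \ {x}), u = c • x ⊔ R := by
  obtain ⟨F, l, hF, rfl⟩ := hu
  by_cases hx : x ∈ F
  · refine ⟨l x, (F.erase x).sup (fun s => l s • s), ⟨F.erase x, l, ?_, rfl⟩, ?_⟩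
    · rw [Finset.coe_erase]
      exact Set.sdiff_subset_sdiff_left hF
    · conv_lhs => rw [← Finset.insert_erase hx, Finset.sup_insert]
  · refine ⟨0, F.sup (fun s => l s • s), ⟨F, l, ?_, rfl⟩, by simp⟩
    exact Set.subset_sdiff_singleton hF hx

end MaxSpan

lemma eq_of_eq_smul_sup {ι : Type*} {c : ℝ≥0} (hc : c < 1) {x R : ι → ℝ≥0}
    (h : x = c • x ⊔ R) : x = R := by
  refine le_antisymm (fun i => ?_) (le_sup_right.trans_eq h.symm)
  by_contra! hlt
  have hci : c * x i < x i := mul_lt_of_lt_one_left (pos_of_gt hlt) hc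
  exact (max_lt hci hlt).ne' (congrFun h i)

section Coordinates

variable {ι : Type*} [DecidableEq ι]

lemma lt_one_of_update_eq_smul_sup {x R : ι → ℝ≥0} {p : ι} {a c : ℝ≥0}
    (hc : c < 1) (hp : x p ≠ 0) (h : Function.update x p (c * x p) = a • x ⊔ R) : a < 1 := by
  have hle : a * x p ≤ c * x p := by
    simpa using (le_sup_left : a • x ≤ a • x ⊔ R).trans_eq h.symm p
  exact (le_of_mul_le_mul_right hle (pos_iff_ne_zero.2 hp)).trans_lt hc

lemma update_mul_sup_update_mul {x : ι → ℝ≥0} {p q : ι} (hpq : p ≠ q) {c d : ℝ≥0}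
    (hc : c ≤ 1) (hd : d ≤ 1) :
    Function.update x p (c * x p) ⊔ Function.update x q (d * x q) = x := by
  funext i
  rcases eq_or_ne i p with rfl | hip
  · simp [hpq, mul_le_of_le_one_left zero_le hc]
  rcases eq_or_ne i q with rfl | hiq
  · simp [hip, mul_le_of_le_one_left zero_le hd]
  · simp [hip, hiq]

lemma exists_lt_one_update_mul_mem {U : Set (ι → ℝ≥0)} (hU : IsOpen U)
    {x : ι → ℝ≥0} (hx : x ∈ U) (p : ι) : ∃ c < 1, Function.update x p (c * x p) ∈ U := by
  have hcont : Continuous fun c : ℝ≥0 => Function.update x p (c * x p) :=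
    continuous_const.update p (continuous_id.mul continuous_const)
  have hnhds : (fun c : ℝ≥0 => Function.update x p (c * x p)) ⁻¹' U ∈ 𝓝 (1 : ℝ≥0) :=
    hcont.continuousAt.preimage_mem_nhds (by simpa using hU.mem_nhds hx)
  have : (𝓝[<] (1 : ℝ≥0)).NeBot := nhdsLT_neBot_of_exists_lt ⟨0, one_pos⟩
  obtain ⟨c, hcU, hc⟩ := (Filter.Eventually.and (nhdsWithin_le_nhds hnhds)
    (self_mem_nhdsWithin : Set.Iio (1 : ℝ≥0) ∈ 𝓝[<] 1)).exists
  exact ⟨c, hc, hcU⟩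

lemma exists_ne_ne_zero_of_mem {K : Set (ι → ℝ≥0)} (hsmul : ∀ c : ℝ≥0, ∀ x ∈ K, c • x ∈ K)
    (hunit : ∀ p : ι, Pi.single p (1 : ℝ≥0) ∉ K) {x : ι → ℝ≥0} (hxK : x ∈ K) (hx0 : x ≠ 0) :
    ∃ p q, p ≠ q ∧ x p ≠ 0 ∧ x q ≠ 0 := by
  obtain ⟨p, hp⟩ := Function.ne_iff.1 hx0
  by_contra! hsingle
  have hx : x = Pi.single p (x p) := by
    funext j
    rcases eq_or_ne j p with rfl | hj
    · simp
    · simp [hj, hsingle p j hj.symm hp]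
  have hscale : (x p)⁻¹ • x = Pi.single p 1 := by
    rw [hx, Pi.single_eq_same, ← Pi.single_smul', smul_eq_mul, inv_mul_cancel₀ hp]
  exact hunit p (hscale ▸ hsmul _ x hxK)

end Coordinates

/-- if `K` is an open max cone (i.e. `K \ {0}` is open) containing
no unit vector `eᵖ`, then every generating set of `K` is totally dependent. -/
theorem stmt12 {n : ℕ} (K : Set (Fin n → ℝ≥0)) (hK : MaxCone K)
    (hopen : IsOpen (K \ {0}))
    (hunit : ∀ p : Fin n, Pi.single p (1 : ℝ≥0) ∉ K) :
    ∀ S : Set (Fin n → ℝ≥0), MaxSpan S = K → TotallyDependent S := by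
  intro S hS x hxS
  rcases eq_or_ne x 0 with rfl | hx0
  · exact zero_mem_maxSpan _
  have hxK : x ∈ K := hS ▸ subset_maxSpan hxS
  obtain ⟨p, q, hpq, hp, hq⟩ := exists_ne_ne_zero_of_mem hK.2.2 hunit hxK hx0
  obtain ⟨c, hc, hy⟩ := exists_lt_one_update_mul_mem hopen ⟨hxK, hx0⟩ p
  obtain ⟨d, hd, hz⟩ := exists_lt_one_update_mul_mem hopen ⟨hxK, hx0⟩ q
  obtain ⟨a, R₁, hR₁, hya⟩ := exists_eq_smul_sup_of_mem_maxSpan x (hS ▸ hy.1)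
  obtain ⟨b, R₂, hR₂, hzb⟩ := exists_eq_smul_sup_of_mem_maxSpan x (hS ▸ hz.1)
  have hab : a ⊔ b < 1 := sup_lt_iff.2
    ⟨lt_one_of_update_eq_smul_sup hc hp hya, lt_one_of_update_eq_smul_sup hd hq hzb⟩
  have hx : x = (a ⊔ b) • x ⊔ (R₁ ⊔ R₂) := calc
    x = Function.update x p (c * x p) ⊔ Function.update x q (d * x q) :=
      (update_mul_sup_update_mul hpq hc.le hd.le).symm
    _ = (a • x ⊔ R₁) ⊔ (b • x ⊔ R₂) := by rw [hya, hzb]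
    _ = (a ⊔ b) • x ⊔ (R₁ ⊔ R₂) := by rw [sup_smul_of_nonneg zero_le]; ac_rfl
  convert sup_mem_maxSpan hR₁ hR₂ using 1
  exact eq_of_eq_smul_sup hab hx
end

section
/- Let K be a closed max cone in ℝ≥0^n. Then K is generated by its set of extremals, and moreover every point of K is a max combination of at most n extremals of K. -/
open scoped NNReal

/-!
For `u ∈ K` and a coordinate `j`, the set of `v ∈ K` with `v ≤ u` and `v j = u j` is compact
and nonempty, so it has a minimal element (minimize `∑ i, v i`). Such a minimal `v` is
extremal: if `v = a ⊔ b` with `a, b ∈ K`, one of `a, b` attains `v j = u j` and, lying below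
`v`, equals `v` by minimality. The supremum of these `n` extremals is `u`, since the one
chosen for `j` matches `u` at `j`.
-/

theorem maxSpan_mono {n : ℕ} {S T : Set (Fin n → ℝ≥0)} (h : S ⊆ T) : MaxSpan S ⊆ MaxSpan T :=
  fun _ ⟨F, lam, hF, hu⟩ => ⟨F, lam, hF.trans h, hu⟩

theorem Finset.sup_id_mem_maxSpan {n : ℕ} (F : Finset (Fin n → ℝ≥0)) :
    F.sup id ∈ MaxSpan ↑F :=
  ⟨F, fun _ => 1, subset_rfl, Finset.sup_congr rfl fun x _ => (one_smul ℝ≥0 x).symm⟩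

theorem MaxCone.maxSpan_subset {n : ℕ} {K S : Set (Fin n → ℝ≥0)} (hK : MaxCone K)
    (hS : S ⊆ K) : MaxSpan S ⊆ K := by
  rintro _ ⟨F, lam, hF, rfl⟩
  induction F using Finset.induction with
  | empty => exact hK.1
  | insert a F _ ih =>
    rw [Finset.sup_insert]
    exact hK.2.1 _ (hK.2.2 _ _ (hS (hF (F.mem_insert_self a))))
      _ (ih ((F.coe_subset.mpr (F.subset_insert a)).trans hF))

theorem IsCompact.exists_minimalIn {n : ℕ} {T : Set (Fin n → ℝ≥0)} (hT : IsCompact T)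
    (hne : T.Nonempty) : ∃ v, MinimalIn T v := by
  have hsum : Continuous fun v : Fin n → ℝ≥0 => ∑ i, v i := by fun_prop
  obtain ⟨v, hvT, hvmin⟩ := hT.exists_isMinOn hne hsum.continuousOn
  refine ⟨v, hvT, fun w hwT hwv => funext fun i => ?_⟩
  have hle : ∀ i ∈ Finset.univ, w i ≤ v i := fun i _ => hwv i
  have hsum_eq : ∑ i, w i = ∑ i, v i := (Finset.sum_le_sum hle).antisymm (hvmin hwT)
  exact (Finset.sum_eq_sum_iff_of_le hle).mp hsum_eq i (Finset.mem_univ i)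

theorem isExtremal_of_minimalIn {n : ℕ} {K : Set (Fin n → ℝ≥0)} {v : Fin n → ℝ≥0} {j : Fin n}
    (hv : MinimalIn {w | w ∈ K ∧ w j = v j} v) : IsExtremal K v := by
  refine ⟨hv.1.1, fun a ha b hb hab => ?_⟩
  have hj : v j = a j ⊔ b j := congrFun hab j
  rcases le_total (a j) (b j) with h | h
  · exact .inr (hv.2 b ⟨hb, by rw [hj, sup_eq_right.mpr h]⟩ (hab ▸ le_sup_right)).symm
  · exact .inl (hv.2 a ⟨ha, by rw [hj, sup_eq_left.mpr h]⟩ (hab ▸ le_sup_left)).symm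

theorem exists_isExtremal_le_apply_eq {n : ℕ} {K : Set (Fin n → ℝ≥0)} (hcl : IsClosed K)
    {u : Fin n → ℝ≥0} (hu : u ∈ K) (j : Fin n) :
    ∃ v, IsExtremal K v ∧ v ≤ u ∧ v j = u j := by
  set T := {v | v ∈ K ∧ v ≤ u ∧ v j = u j}
  have hT_closed : IsClosed T :=
    hcl.inter (isClosed_Iic.inter (isClosed_singleton.preimage (continuous_apply j)))
  have hT_compact : IsCompact T :=
    isCompact_Icc.of_isClosed_subset hT_closed fun v hv => ⟨zero_le, hv.2.1⟩
  obtain ⟨v, ⟨hvK, hvu, hvj⟩, hvmin⟩ := hT_compact.exists_minimalIn ⟨u, hu, le_rfl, rfl⟩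
  refine ⟨v, isExtremal_of_minimalIn (j := j) ⟨⟨hvK, rfl⟩, fun w ⟨hwK, hwj⟩ hwv => ?_⟩, hvu, hvj⟩
  exact hvmin w ⟨hwK, hwv.trans hvu, hwj.trans hvj⟩ hwv

theorem exists_finset_isExtremal_sup_eq {n : ℕ} {K : Set (Fin n → ℝ≥0)} (hcl : IsClosed K)
    {u : Fin n → ℝ≥0} (hu : u ∈ K) :
    ∃ F : Finset (Fin n → ℝ≥0), ↑F ⊆ {x | IsExtremal K x} ∧ F.card ≤ n ∧ F.sup id = u := by
  choose v hv_ext hv_le hv_eq using exists_isExtremal_le_apply_eq hcl hu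
  refine ⟨Finset.univ.image v, ?_, Finset.card_image_le.trans_eq (Finset.card_fin n), ?_⟩
  · simpa [Set.range_subset_iff] using hv_ext
  · rw [Finset.sup_image, Function.id_comp]
    exact (Finset.sup_le fun j _ => hv_le j).antisymm
      fun i => (hv_eq i).ge.trans (Finset.le_sup (f := v) (Finset.mem_univ i) i)

/-- a closed max cone `K` is generated by its extremals, and every
point of `K` is a max combination of at most `n` extremals. -/
theorem stmt13 {n : ℕ} (K : Set (Fin n → ℝ≥0)) (hK : MaxCone K)
    (hcl : IsClosed K) :
    MaxSpan {x | IsExtremal K x} = K ∧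
    ∀ u ∈ K, ∃ F : Finset (Fin n → ℝ≥0),
      ↑F ⊆ {x | IsExtremal K x} ∧ F.card ≤ n ∧ u ∈ MaxSpan ↑F := by
  have hfew : ∀ u ∈ K, ∃ F : Finset (Fin n → ℝ≥0),
      ↑F ⊆ {x | IsExtremal K x} ∧ F.card ≤ n ∧ u ∈ MaxSpan ↑F := by
    intro u hu
    obtain ⟨F, hF, hcard, rfl⟩ := exists_finset_isExtremal_sup_eq hcl hu
    exact ⟨F, hF, hcard, F.sup_id_mem_maxSpan⟩
  refine ⟨(hK.maxSpan_subset fun _ hx => hx.1).antisymm fun u hu => ?_, hfew⟩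
  obtain ⟨F, hF, -, huF⟩ := hfew u hu
  exact maxSpan_mono hF huF
end
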